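/- For integers m ≥ 1 and n ≥ 1, the integral T_{m,n} = ∫₀¹ G_m(x)·xⁿ dx has the closed form T_{m,n} = (1/(n+1))·Σ_{j=1}^{n} (−1)ʲ·(C(n+1,j)/C(m+j,m))·G_{m+j} + 2·(−1)^{n+1}·G_{n+m+1}/((n+m+1)·C(n+m,m)), where C(a,b) denotes the binomial coefficient and G_k = G_k(0) are the Genocchi numbers. -/

import Mathlib

open Finset

/-- The Bernoulli polynomial `Bₙ(x)`, with generating function `t·e^{xt}/(e^t−1)`. -/
noncomputable def bernoulliPoly (n : ℕ) (x : ℝ) : ℝ :=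
  Polynomial.eval x ((Polynomial.bernoulli n).map (algebraMap ℚ ℝ))

/-- The Genocchi polynomial `Gₙ(x) = 2·Bₙ(x) − 2^{n+1}·Bₙ(x/2)`, with generating
function `2t·e^{xt}/(e^t+1)`. -/
noncomputable def genocchiPoly (n : ℕ) (x : ℝ) : ℝ :=
  2 * bernoulliPoly n x - 2 ^ (n + 1) * bernoulliPoly n (x / 2)

/-- The Genocchi number `Gₙ = Gₙ(0)`. -/
noncomputable def genocchi (n : ℕ) : ℝ := genocchiPoly n 0

/-- The Euler polynomial `Eₙ(x) = (2·B_{n+1}(x) − 2^{n+2}·B_{n+1}(x/2))/(n+1)`, with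
generating function `2·e^{xt}/(e^t+1)`. -/
noncomputable def eulerPoly (n : ℕ) (x : ℝ) : ℝ :=
  (2 * bernoulliPoly (n + 1) x - 2 ^ (n + 2) * bernoulliPoly (n + 1) (x / 2)) / (n + 1)

/-- The Euler number (at zero) `Eₙ = Eₙ(0)`. -/
noncomputable def eulerNum (n : ℕ) : ℝ := eulerPoly n 0

/-!
Integrating by parts with `G'ₖ₊₁ = (k + 1) Gₖ` moves the powers of `x` onto the Genocchi
polynomials one at a time; each step contributes a boundary value `Gₘ₊ᵢ₊₁(1)`, and after `n`
steps one is left with `∫₀¹ Gₘ₊ₙ = (Gₘ₊ₙ₊₁(1) - Gₘ₊ₙ₊₁(0)) / (m + n + 1)`. The only arithmetic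
input is `Gₖ(1) = -Gₖ` for `k ≥ 2`, which is the duplication formula
`2ᵏ (Bₖ(x/2) + Bₖ((x+1)/2)) = 2 Bₖ(x)` at `x = 0`. The difference `Dₖ` of the two sides of that
formula is a polynomial with `Dₖ(x + 1) = Dₖ(x)` (by `Bₖ(x + 1) = Bₖ(x) + k xᵏ⁻¹`), hence constant,
and `D'ₖ₊₁ = (k + 1) Dₖ` then forces `Dₖ = 0`.
-/

open Polynomial Nat

namespace Polynomial

theorem eq_C_eval_zero_of_eval_add_one {R : Type*} [CommRing R] [IsDomain R] [CharZero R]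
    (p : R[X]) (hp : ∀ x, p.eval (x + 1) = p.eval x) : p = C (p.eval 0) := by
  have hnat (n : ℕ) : p.eval (n : R) = p.eval 0 := by
    induction n with
    | zero => simp
    | succ n ih => rw [Nat.cast_succ, hp, ih]
  refine eq_of_infinite_eval_eq p _
    (Set.Infinite.mono ?_ (Set.infinite_range_of_injective Nat.cast_injective))
  rintro _ ⟨n, rfl⟩
  simp [hnat]

noncomputable def bernoulliDuplicationDefect (k : ℕ) : ℚ[X] :=
  C (2 ^ k) * ((bernoulli k).comp (C 2⁻¹ * X) + (bernoulli k).comp (C 2⁻¹ * X + C 2⁻¹))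
    - C 2 * bernoulli k

lemma bernoulliDuplicationDefect_eval_add_one (k : ℕ) (x : ℚ) :
    (bernoulliDuplicationDefect k).eval (x + 1) = (bernoulliDuplicationDefect k).eval x := by
  have h1 := bernoulli_eval_one_add k (2⁻¹ * x)
  have h2 := bernoulli_eval_one_add k x
  simp only [bernoulliDuplicationDefect, eval_sub, eval_mul, eval_C, eval_add, eval_comp, eval_X]
  rw [show 2⁻¹ * (x + 1) + 2⁻¹ = 1 + 2⁻¹ * x by ring, show 2⁻¹ * (x + 1) = 2⁻¹ * x + 2⁻¹ by ring,
    h1, add_comm x 1, h2]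
  rcases k with _ | k
  · simp
  · rw [Nat.add_sub_cancel, mul_pow, inv_pow]
    field_simp
    ring

lemma derivative_bernoulliDuplicationDefect (k : ℕ) :
    derivative (bernoulliDuplicationDefect (k + 1)) = (k + 1) * bernoulliDuplicationDefect k := by
  have h : (C 2 * C 2⁻¹ : ℚ[X]) = 1 := by rw [← C_mul]; norm_num
  simp only [bernoulliDuplicationDefect, derivative_sub, derivative_mul, derivative_C,
    derivative_add, derivative_comp, derivative_bernoulli_add_one, derivative_X, zero_mul, zero_add,
    mul_one, add_zero, mul_comp, natCast_comp, add_comp, one_comp, pow_succ, C_mul]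
  linear_combination (C (2 ^ k) * (k + 1) * ((bernoulli k).comp (C 2⁻¹ * X)
    + (bernoulli k).comp (C 2⁻¹ * X + C 2⁻¹))) * h

theorem bernoulli_duplication (k : ℕ) :
    C (2 ^ k) * ((bernoulli k).comp (C 2⁻¹ * X) + (bernoulli k).comp (C 2⁻¹ * X + C 2⁻¹))
      = C 2 * bernoulli k := by
  rw [← sub_eq_zero]
  change bernoulliDuplicationDefect k = 0
  have hconst := eq_C_eval_zero_of_eval_add_one _ (bernoulliDuplicationDefect_eval_add_one (k + 1))
  have h := derivative_bernoulliDuplicationDefect k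
  rw [hconst, derivative_C] at h
  have hk : ((k : ℚ[X]) + 1) ≠ 0 := by exact_mod_cast Nat.succ_ne_zero k
  exact (mul_eq_zero.mp h.symm).resolve_left hk

end Polynomial

lemma bernoulliPoly_eq_aeval (n : ℕ) (x : ℝ) :
    bernoulliPoly n x = aeval x (Polynomial.bernoulli n) :=
  eval_map_algebraMap _ _

lemma bernoulliPoly_duplication (k : ℕ) (x : ℝ) :
    2 ^ k * (bernoulliPoly k (x / 2) + bernoulliPoly k (x / 2 + 1 / 2))
      = 2 * bernoulliPoly k x := by
  have h := congrArg (aeval x) (bernoulli_duplication k)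
  simp only [map_mul, map_add, aeval_C, aeval_comp, aeval_X, map_pow, map_ofNat, map_inv₀] at h
  simp only [bernoulliPoly_eq_aeval, ← h]
  ring_nf

lemma bernoulliPoly_one {k : ℕ} (hk : k ≠ 1) : bernoulliPoly k 1 = bernoulliPoly k 0 := by
  rw [bernoulliPoly, bernoulliPoly, eval_one_map, eval_zero_map, bernoulli_eval_one,
    bernoulli_eval_zero, bernoulli_eq_bernoulli'_of_ne_one hk]

lemma genocchiPoly_one {k : ℕ} (hk : k ≠ 1) : genocchiPoly k 1 = -genocchi k := by
  have h := bernoulliPoly_duplication k 0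
  rw [zero_div, zero_add] at h
  simp only [genocchi, genocchiPoly, zero_div, bernoulliPoly_one hk, pow_succ]
  linear_combination -2 * h

lemma continuous_bernoulliPoly (n : ℕ) : Continuous (bernoulliPoly n) :=
  ((Polynomial.bernoulli n).map (algebraMap ℚ ℝ)).continuous

lemma continuous_genocchiPoly (n : ℕ) : Continuous (genocchiPoly n) := by
  unfold genocchiPoly
  have := continuous_bernoulliPoly n
  fun_prop

lemma hasDerivAt_bernoulliPoly (k : ℕ) (x : ℝ) :
    HasDerivAt (bernoulliPoly (k + 1)) ((k + 1) * bernoulliPoly k x) x := by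
  refine (((Polynomial.bernoulli (k + 1)).map (algebraMap ℚ ℝ)).hasDerivAt x).congr_deriv ?_
  simp [derivative_map, derivative_bernoulli_add_one, bernoulliPoly]

lemma hasDerivAt_genocchiPoly (k : ℕ) (x : ℝ) :
    HasDerivAt (genocchiPoly (k + 1)) ((k + 1) * genocchiPoly k x) x := by
  have hhalf := (hasDerivAt_bernoulliPoly k (x / 2)).comp x ((hasDerivAt_id x).div_const 2)
  refine (((hasDerivAt_bernoulliPoly k x).const_mul 2).sub
    (hhalf.const_mul (2 ^ (k + 2)))).congr_deriv ?_
  simp only [genocchiPoly]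
  ring

lemma hasDerivAt_genocchiPoly_succ_div (k : ℕ) (x : ℝ) :
    HasDerivAt (fun x ↦ genocchiPoly (k + 1) x / (k + 1)) (genocchiPoly k x) x := by
  refine ((hasDerivAt_genocchiPoly k x).div_const _).congr_deriv ?_
  field_simp

lemma integral_genocchiPoly {k : ℕ} (hk : 1 ≤ k) :
    ∫ x in (0:ℝ)..1, genocchiPoly k x = -2 * genocchi (k + 1) / (k + 1) := by
  rw [intervalIntegral.integral_eq_sub_of_hasDerivAt
    (fun x _ ↦ hasDerivAt_genocchiPoly_succ_div k x)
    ((continuous_genocchiPoly k).intervalIntegrable 0 1), genocchiPoly_one (by omega)]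
  simp only [genocchi]
  ring

lemma integral_genocchiPoly_mul_pow_succ {m : ℕ} (hm : 1 ≤ m) (n : ℕ) :
    ∫ x in (0:ℝ)..1, genocchiPoly m x * x ^ (n + 1)
      = -genocchi (m + 1) / (m + 1)
        - (n + 1) / (m + 1) * ∫ x in (0:ℝ)..1, genocchiPoly (m + 1) x * x ^ n := by
  have hpow (x : ℝ) : HasDerivAt (fun x ↦ x ^ (n + 1)) ((n + 1) * x ^ n) x := by
    simpa using hasDerivAt_pow (n + 1) x
  have hparts := intervalIntegral.integral_mul_deriv_eq_deriv_mul (fun x _ ↦ hpow x)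
    (fun x _ ↦ hasDerivAt_genocchiPoly_succ_div m x)
    ((by fun_prop : Continuous fun x : ℝ ↦ (n + 1) * x ^ n).intervalIntegrable 0 1)
    ((continuous_genocchiPoly m).intervalIntegrable 0 1)
  simp only [one_pow, one_mul, zero_pow n.succ_ne_zero, zero_mul, sub_zero,
    genocchiPoly_one (show m + 1 ≠ 1 by omega)] at hparts
  simp only [mul_comm (genocchiPoly m _), hparts, ← intervalIntegral.integral_const_mul]
  congr 2 with x
  ring

lemma integral_genocchiPoly_mul_pow {m : ℕ} (hm : 1 ≤ m) (n : ℕ) :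
    ∫ x in (0:ℝ)..1, genocchiPoly m x * x ^ n
      = ∑ i ∈ range (n + 1),
          (-1) ^ (i + 1) * (n ! * m ! / ((n - i)! * (m + i + 1)!) : ℝ) * genocchi (m + i + 1)
        + (-1) ^ (n + 1) * (n ! * m ! / (m + n + 1)! : ℝ) * genocchi (m + n + 1) := by
  induction n generalizing m with
  | zero =>
    simp only [pow_zero, mul_one, integral_genocchiPoly hm, zero_add, sum_range_one, factorial_zero,
      Nat.sub_zero, add_zero, factorial_succ m]
    push_cast
    field_simp
    ring
  | succ n ih =>
    rw [integral_genocchiPoly_mul_pow_succ hm, ih (by omega : 1 ≤ m + 1), sum_range_succ' _ (n + 1)]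
    have hterm : ∀ i ∈ range (n + 1),
        (-1) ^ (i + 1 + 1) * ((n + 1)! * m ! / ((n + 1 - (i + 1))! * (m + (i + 1) + 1)!) : ℝ)
            * genocchi (m + (i + 1) + 1)
          = -((n + 1) / (m + 1)) * ((-1) ^ (i + 1)
            * (n ! * (m + 1)! / ((n - i)! * (m + 1 + i + 1)!) : ℝ) * genocchi (m + 1 + i + 1)) := by
      intro i _
      rw [show m + (i + 1) + 1 = m + 1 + i + 1 by omega, show n + 1 - (i + 1) = n - i by omega]
      push_cast [factorial_succ]
      field_simp
      ring
    have hfirst : (-1) ^ (0 + 1) * ((n + 1)! * m ! / ((n + 1 - 0)! * (m + 0 + 1)!) : ℝ)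
        * genocchi (m + 0 + 1) = -genocchi (m + 1) / (m + 1) := by
      push_cast [Nat.sub_zero, add_zero, factorial_succ m]
      field_simp
    have hlast : (-1) ^ (n + 1 + 1) * ((n + 1)! * m ! / (m + (n + 1) + 1)! : ℝ)
          * genocchi (m + (n + 1) + 1)
        = -((n + 1) / (m + 1)) * ((-1) ^ (n + 1)
          * (n ! * (m + 1)! / (m + 1 + n + 1)! : ℝ) * genocchi (m + 1 + n + 1)) := by
      rw [show m + (n + 1) + 1 = m + 1 + n + 1 by omega]
      push_cast [factorial_succ]
      field_simp
      ring
    rw [sum_congr rfl hterm, ← mul_sum, hfirst, hlast]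
    ring

lemma cast_choose_succ_div_mul_cast_choose {n i : ℕ} (m : ℕ) (hi : i ≤ n) :
    ((n + 1).choose (i + 1) : ℝ) / ((n + 1) * (m + i + 1).choose m)
      = n ! * m ! / ((n - i)! * (m + i + 1)!) := by
  rw [Nat.cast_choose ℝ (by omega : i + 1 ≤ n + 1), Nat.cast_choose ℝ (by omega : m ≤ m + i + 1),
    show n + 1 - (i + 1) = n - i by omega, show m + i + 1 - m = i + 1 by omega]
  push_cast [factorial_succ]
  field_simp

lemma cast_succ_mul_cast_choose (m n : ℕ) :
    (((n + m + 1 : ℕ) : ℝ) * (n + m).choose m) = (m + n + 1)! / (n ! * m !) := by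
  rw [Nat.cast_choose ℝ (by omega : m ≤ n + m), show n + m - m = n by omega, add_comm n m]
  push_cast [factorial_succ]
  field_simp

theorem T_closed_form_general (m n : ℕ) (hm : 1 ≤ m) :
    (∫ x in (0:ℝ)..1, genocchiPoly m x * x ^ n) =
      (1 / ((n : ℝ) + 1)) * (∑ j ∈ Finset.Icc 1 n,
          (-1 : ℝ) ^ j * (((n + 1).choose j : ℝ) / ((m + j).choose m : ℝ)) * genocchi (m + j))
        + 2 * (-1 : ℝ) ^ (n + 1) * genocchi (n + m + 1) /
            (((n + m + 1 : ℕ) : ℝ) * ((n + m).choose m : ℝ)) := by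
  have hterm : ∀ i ∈ range n,
      1 / ((n : ℝ) + 1) * ((-1) ^ (1 + i)
        * (((n + 1).choose (1 + i) : ℝ) / ((m + (1 + i)).choose m)) * genocchi (m + (1 + i)))
      = (-1) ^ (i + 1) * (n ! * m ! / ((n - i)! * (m + i + 1)!) : ℝ) * genocchi (m + i + 1) := by
    intro i hi
    rw [add_comm 1 i, ← add_assoc, ← cast_choose_succ_div_mul_cast_choose m (mem_range.mp hi).le]
    field_simp
  rw [integral_genocchiPoly_mul_pow hm n, sum_range_succ, ← Ico_add_one_right_eq_Icc,
    sum_Ico_eq_sum_range, Nat.add_sub_cancel, mul_sum, sum_congr rfl hterm,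
    cast_succ_mul_cast_choose, Nat.sub_self, factorial_zero, Nat.cast_one, one_mul, add_comm n m,
    add_assoc]
  congr 1
  field_simp
  ring

theorem T_closed_form (m n : ℕ) (hm : 1 ≤ m) (hn : 1 ≤ n) :
    (∫ x in (0:ℝ)..1, genocchiPoly m x * x ^ n) =
      (1 / ((n : ℝ) + 1)) * (∑ j ∈ Finset.Icc 1 n,
          (-1 : ℝ) ^ j * (((n + 1).choose j : ℝ) / ((m + j).choose m : ℝ)) * genocchi (m + j))
        + 2 * (-1 : ℝ) ^ (n + 1) * genocchi (n + m + 1) /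
            (((n + m + 1 : ℕ) : ℝ) * ((n + m).choose m : ℝ)) :=
  T_closed_form_general m n hm
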